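/- arXiv:2601.08006 — 7 statements merged into one kernel-verified Lean document; each statement's English description precedes it below -/
import Mathlib

section
/- Let λ₁ ≥ λ₂ ≥ 0 and let Δt > 0 and β be real numbers with β ≥ λ₁/2. For every (k₁, k₂) ∈ ℝ², the amplification factor of the backward-Euler EIN-penalized scheme, R(k₁,k₂) = (1 − Δt((λ₁−β)k₁² + (λ₂−β)k₂²)) / (1 + Δt·β·(k₁² + k₂²)), satisfies R(k₁,k₂) = 1 − Δt·(λ₁k₁² + λ₂k₂²)/(1 + Δt·β·(k₁² + k₂²)) and |R(k₁,k₂)| ≤ 1. -/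
/-- Amplification factor of the backward-Euler EIN-penalized scheme for
constant-coefficient anisotropic diffusion: rewrite and stability bound. -/
theorem stmt0 (lam₁ lam₂ Δt β : ℝ) (h₁₂ : lam₁ ≥ lam₂) (h₂ : lam₂ ≥ 0)
    (hΔt : Δt > 0) (hβ : β ≥ lam₁ / 2) (k₁ k₂ : ℝ) :
    (1 - Δt * ((lam₁ - β) * k₁ ^ 2 + (lam₂ - β) * k₂ ^ 2)) /
        (1 + Δt * β * (k₁ ^ 2 + k₂ ^ 2)) =
      1 - Δt * (lam₁ * k₁ ^ 2 + lam₂ * k₂ ^ 2) / (1 + Δt * β * (k₁ ^ 2 + k₂ ^ 2)) ∧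
    |(1 - Δt * ((lam₁ - β) * k₁ ^ 2 + (lam₂ - β) * k₂ ^ 2)) /
        (1 + Δt * β * (k₁ ^ 2 + k₂ ^ 2))| ≤ 1 := by
  have hβ0 : β ≥ 0 := by nlinarith [sq_nonneg k₁]
  have hD : (0:ℝ) < 1 + Δt * β * (k₁ ^ 2 + k₂ ^ 2) := by
    nlinarith [sq_nonneg k₁, sq_nonneg k₂, mul_nonneg hΔt.le hβ0]
  constructor
  · field_simp
    ring
  · rw [abs_div, abs_of_pos hD, div_le_one hD, abs_le]
    constructor
    · nlinarith [sq_nonneg k₁, sq_nonneg k₂, mul_nonneg hΔt.le (sq_nonneg k₁),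
        mul_nonneg hΔt.le (sq_nonneg k₂)]
    · nlinarith [mul_nonneg hΔt.le (sq_nonneg k₁), mul_nonneg hΔt.le (sq_nonneg k₂)]
end

section
/- For x ∈ ℝ define the Chang–Cooper weight δ(x) = 1/x − 1/(eˣ − 1) for x ≠ 0. Then for every x > 0 one has 0 < δ(x) < 1/2, and for every x < 0 one has 1/2 < δ(x) < 1; in particular δ(x) ∈ (0,1) for all x ≠ 0. -/
/-! The lower bound is `x < eˣ - 1`. The upper bound `δ(x) < 1/2` for `x > 0` unfolds to
`2 (eˣ - 1) < x (eˣ + 1)`, which is the logarithm bound `2y / (y + 2) < log (1 + y)` at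
`y = eˣ - 1`. The case `x < 0` follows from the symmetry `δ(-x) = 1 - δ(x)`. -/

open Real

noncomputable def changCooperWeight (x : ℝ) : ℝ := 1 / x - 1 / (exp x - 1)

lemma two_mul_exp_sub_one_lt_mul_exp_add_one {x : ℝ} (hx : 0 < x) :
    2 * (exp x - 1) < x * (exp x + 1) := by
  have hy : 0 < exp x - 1 := by linarith [add_one_lt_exp hx.ne']
  have h := lt_log_one_add_of_pos hy
  rw [add_sub_cancel, log_exp, div_lt_iff₀ (by linarith)] at h
  linarith

lemma changCooperWeight_pos {x : ℝ} (hx : 0 < x) : 0 < changCooperWeight x := by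
  have hlt : x < exp x - 1 := by linarith [add_one_lt_exp hx.ne']
  exact sub_pos.mpr (one_div_lt_one_div_of_lt hx hlt)

lemma changCooperWeight_lt_half {x : ℝ} (hx : 0 < x) : changCooperWeight x < 1 / 2 := by
  have hE : 0 < exp x - 1 := by linarith [add_one_lt_exp hx.ne']
  rw [changCooperWeight, div_sub_div _ _ hx.ne' hE.ne', div_lt_div_iff₀ (by positivity) two_pos]
  linarith [two_mul_exp_sub_one_lt_mul_exp_add_one hx]

lemma changCooperWeight_neg {x : ℝ} (hx : x ≠ 0) :
    changCooperWeight (-x) = 1 - changCooperWeight x := by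
  have hE : exp x - 1 ≠ 0 := sub_ne_zero.mpr fun h => hx ((exp_eq_one_iff x).mp h)
  have hE' : 1 - exp x ≠ 0 := fun h => hE (by linarith)
  rw [changCooperWeight, changCooperWeight, exp_neg]
  field_simp
  ring

/-- Bounds on the classical Chang–Cooper weight δ(x) = 1/x − 1/(eˣ − 1). -/
theorem stmt3 (δ : ℝ → ℝ) (hδ : ∀ x : ℝ, x ≠ 0 → δ x = 1 / x - 1 / (Real.exp x - 1)) :
    (∀ x : ℝ, 0 < x → 0 < δ x ∧ δ x < 1 / 2) ∧
    (∀ x : ℝ, x < 0 → 1 / 2 < δ x ∧ δ x < 1) ∧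
    (∀ x : ℝ, x ≠ 0 → δ x ∈ Set.Ioo (0 : ℝ) 1) := by
  have hδ' : ∀ x, x ≠ 0 → δ x = changCooperWeight x := hδ
  have hpos : ∀ x : ℝ, 0 < x → 0 < δ x ∧ δ x < 1 / 2 := fun x hx => by
    rw [hδ' x hx.ne']
    exact ⟨changCooperWeight_pos hx, changCooperWeight_lt_half hx⟩
  have hneg : ∀ x : ℝ, x < 0 → 1 / 2 < δ x ∧ δ x < 1 := fun x hx => by
    rw [hδ' x hx.ne, ← neg_neg x, changCooperWeight_neg (neg_ne_zero.mpr hx.ne)]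
    have := changCooperWeight_pos (neg_pos.mpr hx)
    have := changCooperWeight_lt_half (neg_pos.mpr hx)
    constructor <;> linarith
  refine ⟨hpos, hneg, fun x hx => ?_⟩
  rcases hx.lt_or_gt with h | h
  · exact ⟨by linarith [(hneg x h).1], (hneg x h).2⟩
  · exact ⟨(hpos x h).1, by linarith [(hpos x h).2]⟩
end

section
/- Let D ≠ 0, a ≠ 0, Δv > 0, x ≠ 0, and f₋ be real numbers, set w = a/D, f₊ = f₋·exp(−x), and define the modified Chang–Cooper weight θ = 1/(Δv·w) − 1/(exp(x) − 1). Then the numerical flux vanishes exactly: D·(f₊ − f₋)/Δv + a·((1 − θ)·f₊ + θ·f₋) = 0. -/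
/-- Exact cancellation of the modified Chang–Cooper numerical flux on a
discrete equilibrium profile fplus = fminus·exp(−x). -/
theorem stmt4 (D a Δv x fminus : ℝ) (hD : D ≠ 0) (ha : a ≠ 0) (hΔv : 0 < Δv)
    (hx : x ≠ 0) (w fplus θ : ℝ) (hw : w = a / D)
    (hf : fplus = fminus * Real.exp (-x))
    (hθ : θ = 1 / (Δv * w) - 1 / (Real.exp x - 1)) :
    D * (fplus - fminus) / Δv + a * ((1 - θ) * fplus + θ * fminus) = 0 := by
  have hE : Real.exp x ≠ 1 := by
    simp [Real.exp_eq_one_iff, hx]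
  have hE1 : Real.exp x - 1 ≠ 0 := sub_ne_zero.mpr hE
  have hEpos : Real.exp x ≠ 0 := (Real.exp_pos x).ne'
  have hv : Δv ≠ 0 := hΔv.ne'
  have hwne : w ≠ 0 := by rw [hw]; exact div_ne_zero ha hD
  subst hw hf hθ
  rw [Real.exp_neg]
  field_simp
  ring
end

section
/- Let d ≥ 1, let f : ℝᵈ → ℝ be a Schwartz function, and let β : ℝᵈ → ℝ be bounded and continuous. Define A_β = −∫ β·∇f dv, p_β = ∫ v·β·f dv, n_β = ∫ β·f dv, and B_β = −∫ β·(v·∇f) dv. Then n_β·B_β − A_β·p_β = −∫∫ β(v)·β(v')·(v − v')·∇f(v)·f(v') dv dv' = (1/2)·∫∫ β(v)·β(v')·(v − v')·(∇f(v')·f(v) − ∇f(v)·f(v')) dv dv'. -/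
/-!
With `g = β f` and `h = β ∇f`, the integrand of either double integral is a sum of products of a
function of `v` and a function of `v'`, so each iterated integral factors into the moments
`n = ∫ g`, `p = ∫ g v`, `A = -∫ h`, `B = -∫ ⟪v, h⟫`. The antisymmetrised kernel produces the
combination `n B - ⟪A, p⟫` twice, which explains the factor `1 / 2`.
-/

open MeasureTheory
open scoped RealInnerProductSpace

section Moments

variable {E : Type*} [NormedAddCommGroup E] [InnerProductSpace ℝ E]
  [MeasurableSpace E] {μ : Measure E} {g : E → ℝ} {h : E → E}

lemma integrable_inner_sub_mul (hg : Integrable g μ) (hgv : Integrable (fun v ↦ g v • v) μ)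
    (x y : E) : Integrable (fun v ↦ ⟪x - v, y⟫ * g v) μ :=
  ((hg.const_mul ⟪x, y⟫).sub (hgv.const_inner y)).congr <| .of_forall fun v ↦ by
    simp only [Pi.sub_apply, inner_sub_left, real_inner_smul_right, real_inner_comm v y]
    ring

lemma integrable_inner_sub (hh : Integrable h μ) (hhv : Integrable (fun v ↦ ⟪v, h v⟫) μ)
    (x : E) : Integrable (fun v ↦ ⟪x - v, h v⟫) μ :=
  ((hh.const_inner x).sub hhv).congr <| .of_forall fun v ↦ (inner_sub_left x v (h v)).symm

variable [CompleteSpace E]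

lemma integral_inner_sub_mul (hg : Integrable g μ) (hgv : Integrable (fun v ↦ g v • v) μ)
    (x y : E) :
    ∫ v, ⟪x - v, y⟫ * g v ∂μ = ⟪x, y⟫ * ∫ v, g v ∂μ - ⟪y, ∫ v, g v • v ∂μ⟫ := by
  have hsplit : (fun v ↦ ⟪x - v, y⟫ * g v) = fun v ↦ ⟪x, y⟫ * g v - ⟪y, g v • v⟫ := by
    ext v
    rw [inner_sub_left, real_inner_smul_right, real_inner_comm v y]
    ring
  rw [hsplit, integral_sub (hg.const_mul _) (hgv.const_inner y), integral_const_mul,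
    integral_inner hgv]

lemma integral_inner_sub (hh : Integrable h μ) (hhv : Integrable (fun v ↦ ⟪v, h v⟫) μ) (x : E) :
    ∫ v, ⟪x - v, h v⟫ ∂μ = ⟪x, ∫ v, h v ∂μ⟫ - ∫ v, ⟪v, h v⟫ ∂μ := by
  simp only [inner_sub_left]
  rw [integral_sub (hh.const_inner x) hhv, integral_inner hh]

lemma integral_integral_inner_sub_mul (hg : Integrable g μ)
    (hgv : Integrable (fun v ↦ g v • v) μ) (hh : Integrable h μ)
    (hhv : Integrable (fun v ↦ ⟪v, h v⟫) μ) :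
    ∫ v, ∫ v', ⟪v - v', h v⟫ * g v' ∂μ ∂μ
      = (∫ v, ⟪v, h v⟫ ∂μ) * (∫ v, g v ∂μ) - ⟪∫ v, g v • v ∂μ, ∫ v, h v ∂μ⟫ := by
  simp only [integral_inner_sub_mul hg hgv, real_inner_comm _ (h _)]
  rw [integral_sub (hhv.mul_const _) (hh.const_inner _), integral_mul_const, integral_inner hh]

lemma integral_integral_mul_inner_sub (hg : Integrable g μ)
    (hgv : Integrable (fun v ↦ g v • v) μ) (hh : Integrable h μ)
    (hhv : Integrable (fun v ↦ ⟪v, h v⟫) μ) :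
    ∫ v, ∫ v', g v * ⟪v - v', h v'⟫ ∂μ ∂μ
      = ⟪∫ v, g v • v ∂μ, ∫ v, h v ∂μ⟫ - (∫ v, g v ∂μ) * ∫ v, ⟪v, h v⟫ ∂μ := by
  have hsplit : ∀ v, g v * (⟪v, ∫ v', h v' ∂μ⟫ - ∫ v', ⟪v', h v'⟫ ∂μ)
      = ⟪∫ v', h v' ∂μ, g v • v⟫ - g v * ∫ v', ⟪v', h v'⟫ ∂μ := fun v ↦ by
    rw [real_inner_smul_right, real_inner_comm]
    ring
  simp only [integral_const_mul, integral_inner_sub hh hhv, hsplit]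
  rw [integral_sub (hgv.const_inner _) (hg.mul_const _), integral_inner hgv, integral_mul_const,
    real_inner_comm]

lemma integrable_integral_inner_sub_mul (hg : Integrable g μ)
    (hgv : Integrable (fun v ↦ g v • v) μ) (hh : Integrable h μ)
    (hhv : Integrable (fun v ↦ ⟪v, h v⟫) μ) :
    Integrable (fun v ↦ ∫ v', ⟪v - v', h v⟫ * g v' ∂μ) μ := by
  simp only [integral_inner_sub_mul hg hgv]
  exact (hhv.mul_const _).sub (hh.inner_const _)

lemma integrable_integral_mul_inner_sub (hg : Integrable g μ)
    (hgv : Integrable (fun v ↦ g v • v) μ) (hh : Integrable h μ)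
    (hhv : Integrable (fun v ↦ ⟪v, h v⟫) μ) :
    Integrable (fun v ↦ ∫ v', g v * ⟪v - v', h v'⟫ ∂μ) μ := by
  simp only [integral_const_mul, integral_inner_sub hh hhv]
  refine ((hgv.inner_const (∫ v, h v ∂μ)).sub (hg.mul_const (∫ v, ⟪v, h v⟫ ∂μ))).congr
    (.of_forall fun v ↦ ?_)
  simp only [Pi.sub_apply, real_inner_smul_left]
  ring

lemma integral_integral_inner_sub_antisymm (hg : Integrable g μ)
    (hgv : Integrable (fun v ↦ g v • v) μ) (hh : Integrable h μ)
    (hhv : Integrable (fun v ↦ ⟪v, h v⟫) μ) :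
    ∫ v, ∫ v', ⟪v - v', g v • h v' - g v' • h v⟫ ∂μ ∂μ
      = 2 * (⟪∫ v, g v • v ∂μ, ∫ v, h v ∂μ⟫ - (∫ v, g v ∂μ) * ∫ v, ⟪v, h v⟫ ∂μ) := by
  have hsplit : ∀ v, ∫ v', ⟪v - v', g v • h v' - g v' • h v⟫ ∂μ
      = ∫ v', g v * ⟪v - v', h v'⟫ ∂μ - ∫ v', ⟪v - v', h v⟫ * g v' ∂μ := fun v ↦ by
    rw [← integral_sub ((integrable_inner_sub hh hhv v).const_mul _)
      (integrable_inner_sub_mul hg hgv v (h v))]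
    congr 1 with v'
    rw [inner_sub_right, real_inner_smul_right, real_inner_smul_right]
    ring
  rw [integral_congr_ae (.of_forall hsplit), integral_sub
    (integrable_integral_mul_inner_sub hg hgv hh hhv)
    (integrable_integral_inner_sub_mul hg hgv hh hhv),
    integral_integral_mul_inner_sub hg hgv hh hhv, integral_integral_inner_sub_mul hg hgv hh hhv]
  ring

end Moments

namespace SchwartzMap

variable {E : Type*} [NormedAddCommGroup E] [InnerProductSpace ℝ E] [MeasurableSpace E]
  [BorelSpace E] [SecondCountableTopology E] {μ : Measure E} [μ.HasTemperateGrowth]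

lemma integrable_smul_self (f : 𝓢(E, ℝ)) : Integrable (fun v ↦ f v • v) μ :=
  (f.integrable_pow_mul μ 1).mono' (f.continuous.smul continuous_id).aestronglyMeasurable
    (.of_forall fun v ↦ by rw [norm_smul, pow_one, mul_comm])

variable [CompleteSpace E]

lemma integrable_gradient (f : 𝓢(E, ℝ)) : Integrable (gradient f) μ :=
  (InnerProductSpace.toDual ℝ E).symm.integrable_comp_iff.mpr (fderivCLM ℝ E ℝ f).integrable

lemma integrable_inner_gradient (f : 𝓢(E, ℝ)) :
    Integrable (fun v ↦ ⟪v, gradient f v⟫) μ := by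
  have hinner : ∀ v, ⟪v, gradient f v⟫ = fderiv ℝ f v v := fun v ↦ by
    rw [real_inner_comm]
    exact InnerProductSpace.toDual_symm_apply
  simp only [hinner]
  refine ((fderivCLM ℝ E ℝ f).integrable_pow_mul μ 1).mono'
    ((fderivCLM ℝ E ℝ f).continuous.clm_apply continuous_id).aestronglyMeasurable
    (.of_forall fun v ↦ ?_)
  rw [pow_one, mul_comm, fderivCLM_apply]
  exact (fderiv ℝ f v).le_opNorm v

end SchwartzMap

theorem stmt9_general (d : ℕ)
    (f : SchwartzMap (EuclideanSpace ℝ (Fin d)) ℝ)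
    (β : EuclideanSpace ℝ (Fin d) → ℝ)
    (hβc : Continuous β) (hβb : ∃ M, ∀ v, |β v| ≤ M)
    (Aβ pβ : EuclideanSpace ℝ (Fin d)) (nβ Bβ : ℝ)
    (hA : Aβ = -∫ v, β v • gradient (⇑f) v)
    (hp : pβ = ∫ v, (β v * f v) • v)
    (hn : nβ = ∫ v, β v * f v)
    (hB : Bβ = -∫ v, β v * ⟪v, gradient (⇑f) v⟫) :
    nβ * Bβ - ⟪Aβ, pβ⟫ =
      -∫ v, ∫ v', β v * β v' * (⟪v - v', gradient (⇑f) v⟫ * f v') ∧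
    nβ * Bβ - ⟪Aβ, pβ⟫ =
      (1 / 2) * ∫ v, ∫ v',
        β v * β v' * ⟪v - v', f v • gradient (⇑f) v' - f v' • gradient (⇑f) v⟫ := by
  obtain ⟨M, hM⟩ := hβb
  have hβm : AEStronglyMeasurable β := hβc.aestronglyMeasurable
  have hβM : ∀ᵐ v, ‖β v‖ ≤ M := .of_forall hM
  set g := fun v ↦ β v * f v
  set h := fun v ↦ β v • gradient f v
  have hg : Integrable g := f.integrable.bdd_smul M hβm hβM
  have hgv : Integrable (fun v ↦ g v • v) :=
    (f.integrable_smul_self.bdd_smul M hβm hβM).congr (.of_forall fun v ↦ smul_smul (β v) (f v) v)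
  have hh : Integrable h := f.integrable_gradient.bdd_smul M hβm hβM
  have hhv : Integrable (fun v ↦ ⟪v, h v⟫) :=
    (f.integrable_inner_gradient.bdd_smul M hβm hβM).congr
      (.of_forall fun v ↦ (real_inner_smul_right _ _ _).symm)
  have hB' : Bβ = -∫ v, ⟪v, h v⟫ := by simp only [hB, h, real_inner_smul_right]
  have hfirst : ∀ v, ∫ v', β v * β v' * (⟪v - v', gradient f v⟫ * f v')
      = ∫ v', ⟪v - v', h v⟫ * g v' := fun v ↦ by
    congr 1 with v'
    simp only [g, h, real_inner_smul_right]
    ring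
  have hsecond : ∀ v, ∫ v', β v * β v' * ⟪v - v', f v • gradient f v' - f v' • gradient f v⟫
      = ∫ v', ⟪v - v', g v • h v' - g v' • h v⟫ := fun v ↦ by
    congr 1 with v'
    simp only [g, h, inner_sub_right, real_inner_smul_right]
    ring
  rw [hA, hp, hn, hB', integral_congr_ae (.of_forall hfirst),
    integral_congr_ae (.of_forall hsecond), integral_integral_inner_sub_mul hg hgv hh hhv,
    integral_integral_inner_sub_antisymm hg hgv hh hhv, inner_neg_left, real_inner_comm]
  constructor <;> ring

/-- Double-integral representations of the denominator n_β·B_β − A_β·p_β of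
the effective-temperature formula of the conservative penalization operator. -/
theorem stmt9 (d : ℕ) (hd : 1 ≤ d)
    (f : SchwartzMap (EuclideanSpace ℝ (Fin d)) ℝ)
    (β : EuclideanSpace ℝ (Fin d) → ℝ)
    (hβc : Continuous β) (hβb : ∃ M, ∀ v, |β v| ≤ M)
    (Aβ pβ : EuclideanSpace ℝ (Fin d)) (nβ Bβ : ℝ)
    (hA : Aβ = -∫ v, β v • gradient (⇑f) v)
    (hp : pβ = ∫ v, (β v * f v) • v)
    (hn : nβ = ∫ v, β v * f v)
    (hB : Bβ = -∫ v, β v * ⟪v, gradient (⇑f) v⟫) :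
    nβ * Bβ - ⟪Aβ, pβ⟫ =
      -∫ v, ∫ v', β v * β v' * (⟪v - v', gradient (⇑f) v⟫ * f v') ∧
    nβ * Bβ - ⟪Aβ, pβ⟫ =
      (1 / 2) * ∫ v, ∫ v',
        β v * β v' * ⟪v - v', f v • gradient (⇑f) v' - f v' • gradient (⇑f) v⟫ :=
  stmt9_general d f β hβc hβb Aβ pβ nβ Bβ hA hp hn hB
end

section
/- Let d ≥ 1, let Σ be a symmetric positive-definite d×d real matrix, u ∈ ℝᵈ, C > 0, and f(v) = C·exp(−(1/2)·(v − u)·Σ⁻¹·(v − u)). Let β : ℝᵈ → ℝ be continuous, bounded, and strictly positive everywhere. With n_β = ∫ β f dv, p_β = ∫ v β f dv, A_β = −∫ β ∇f dv, and B_β = −∫ β (v·∇f) dv, one has n_β·B_β − A_β·p_β > 0. -/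
/-!
With `T = S⁻¹` one has `∇f v = -f v • T (v - u)`, so for the weight `g = β f` the moments are
`A_β = ∫ g • T (v - u)` and `B_β = ∫ g ⟪v, T (v - u)⟫`. The terms in `u` cancel and
`n_β B_β - ⟪A_β, p_β⟫ = n ∫ g ⟪v, T v⟫ - ⟪p, T p⟫`; centring at the weighted mean `c = p / n`
rewrites this as `n ∫ g ⟪v - c, T (v - c)⟫`, which is positive because `g > 0` and `T` is positive
definite. All integrals converge because `β` is bounded and a Gaussian has finite second moments.
-/

open MeasureTheory
open scoped RealInnerProductSpace

section SecondMoment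

variable {E : Type*} [NormedAddCommGroup E] [MeasurableSpace E] [OpensMeasurableSpace E]
  {μ : Measure E} {g : E → ℝ}

theorem MeasureTheory.Integrable.aestronglyMeasurable_of_one_add_norm_sq_mul
    (hg2 : Integrable (fun v => (1 + ‖v‖) ^ 2 * g v) μ) : AEStronglyMeasurable g μ := by
  have hpos : ∀ v : E, (1 + ‖v‖) ^ 2 ≠ 0 := fun v => by positivity
  refine ((Continuous.inv₀ (by fun_prop) hpos).aestronglyMeasurable.mul
    hg2.aestronglyMeasurable).congr (ae_of_all _ fun v => ?_)
  simp [hpos v]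

theorem MeasureTheory.Integrable.of_one_add_norm_sq_mul
    (hg2 : Integrable (fun v => (1 + ‖v‖) ^ 2 * g v) μ) : Integrable g μ :=
  hg2.mono hg2.aestronglyMeasurable_of_one_add_norm_sq_mul <| ae_of_all _ fun v => by
    rw [norm_mul, norm_pow, Real.norm_of_nonneg (by positivity : 0 ≤ 1 + ‖v‖)]
    exact le_mul_of_one_le_left (norm_nonneg _) (one_le_pow₀ (by linarith [norm_nonneg v]))

theorem MeasureTheory.Integrable.smul_id_of_one_add_norm_sq_mul [NormedSpace ℝ E]
    [SecondCountableTopology E]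
    (hg2 : Integrable (fun v => (1 + ‖v‖) ^ 2 * g v) μ) : Integrable (fun v => g v • v) μ :=
  hg2.mono (hg2.aestronglyMeasurable_of_one_add_norm_sq_mul.smul aestronglyMeasurable_id) <|
    ae_of_all _ fun v => by
      rw [norm_smul, norm_mul, norm_pow, Real.norm_of_nonneg (by positivity : 0 ≤ 1 + ‖v‖),
        mul_comm]
      exact mul_le_mul_of_nonneg_right (by nlinarith [norm_nonneg v]) (norm_nonneg _)

theorem MeasureTheory.Integrable.mul_inner_sub_apply_sub_of_one_add_norm_sq_mul
    [InnerProductSpace ℝ E]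
    (hg2 : Integrable (fun v => (1 + ‖v‖) ^ 2 * g v) μ) (T : E →L[ℝ] E) (c : E) :
    Integrable (fun v => g v * ⟪v - c, T (v - c)⟫) μ := by
  refine (hg2.norm.const_mul (‖T‖ * (1 + ‖c‖) ^ 2)).mono'
    (hg2.aestronglyMeasurable_of_one_add_norm_sq_mul.mul
      (by fun_prop : Continuous fun v => ⟪v - c, T (v - c)⟫).aestronglyMeasurable)
    (ae_of_all _ fun v => ?_)
  have hvc : ‖v - c‖ ≤ (1 + ‖c‖) * (1 + ‖v‖) := by
    nlinarith [norm_sub_le v c, norm_nonneg v, norm_nonneg c]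
  rw [norm_mul, norm_mul, norm_pow, Real.norm_of_nonneg (by positivity : 0 ≤ 1 + ‖v‖),
    mul_comm ‖g v‖, ← mul_assoc]
  refine mul_le_mul_of_nonneg_right ?_ (norm_nonneg _)
  calc ‖⟪v - c, T (v - c)⟫‖ ≤ ‖v - c‖ * (‖T‖ * ‖v - c‖) :=
        (norm_inner_le_norm _ _).trans (by gcongr; exact T.le_opNorm _)
    _ = ‖T‖ * ‖v - c‖ ^ 2 := by ring
    _ ≤ ‖T‖ * ((1 + ‖c‖) * (1 + ‖v‖)) ^ 2 := by gcongr
    _ = ‖T‖ * (1 + ‖c‖) ^ 2 * (1 + ‖v‖) ^ 2 := by ring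

end SecondMoment

section WeightedVariance

variable {E : Type*} [NormedAddCommGroup E] [InnerProductSpace ℝ E] [CompleteSpace E]
  [SecondCountableTopology E] [MeasurableSpace E] [BorelSpace E] {μ : Measure E} {g : E → ℝ}

theorem integral_mul_inner_sub_apply_sub (T : E →L[ℝ] E)
    (hg2 : Integrable (fun v => (1 + ‖v‖) ^ 2 * g v) μ) (c : E) :
    ∫ v, g v * ⟪v - c, T (v - c)⟫ ∂μ
      = ∫ v, g v * ⟪v, T v⟫ ∂μ - ⟪T c, ∫ v, g v • v ∂μ⟫ - ⟪c, T (∫ v, g v • v ∂μ)⟫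
        + (∫ v, g v ∂μ) * ⟪c, T c⟫ := by
  have h0 : Integrable g μ := hg2.of_one_add_norm_sq_mul
  have h1 : Integrable (fun v => g v • v) μ := hg2.smul_id_of_one_add_norm_sq_mul
  have h2 : Integrable (fun v => g v * ⟪v, T v⟫) μ := by
    simpa using hg2.mul_inner_sub_apply_sub_of_one_add_norm_sq_mul T 0
  have hpt : ∀ v, g v * ⟪v - c, T (v - c)⟫
      = g v * ⟪v, T v⟫ - ⟪T c, g v • v⟫ - ⟪c, T (g v • v)⟫ + g v * ⟪c, T c⟫ := by
    intro v
    simp only [map_sub, map_smul, inner_sub_left, inner_sub_right, real_inner_smul_right]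
    rw [real_inner_comm (T c) v, real_inner_comm (T c) c]
    ring
  have h1T : Integrable (fun v => T (g v • v)) μ := T.integrable_comp h1
  simp_rw [hpt]
  rw [integral_add ?_ (h0.mul_const _), integral_sub ?_ (h1T.const_inner c),
    integral_sub h2 (h1.const_inner _), integral_mul_const, integral_inner h1,
    integral_inner h1T, T.integral_comp_comm h1]
  · exact h2.sub (h1.const_inner _)
  · exact (h2.sub (h1.const_inner _)).sub (h1T.const_inner c)

theorem inner_integral_smul_apply_lt_integral_mul_integral [Nontrivial E] [μ.IsOpenPosMeasure]
    (T : E →L[ℝ] E) (hT : ∀ x ≠ 0, 0 < ⟪x, T x⟫) (hg : ∀ v, 0 < g v)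
    (hg2 : Integrable (fun v => (1 + ‖v‖) ^ 2 * g v) μ) :
    ⟪∫ v, g v • v ∂μ, T (∫ v, g v • v ∂μ)⟫ < (∫ v, g v ∂μ) * ∫ v, g v * ⟪v, T v⟫ ∂μ := by
  set n := ∫ v, g v ∂μ with hn_def
  set p := ∫ v, g v • v ∂μ with hp_def
  have hn : 0 < n := by
    refine (integral_pos_iff_support_of_nonneg (fun v => (hg v).le)
      hg2.of_one_add_norm_sq_mul).2 ?_
    rw [Function.support_eq_univ fun v => (hg v).ne']
    exact isOpen_univ.measure_pos μ Set.univ_nonempty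
  set c := n⁻¹ • p
  have hq : ∀ v, 0 ≤ g v * ⟪v - c, T (v - c)⟫ := fun v => by
    rcases eq_or_ne (v - c) 0 with h | h
    · simp [h]
    · exact (mul_pos (hg v) (hT _ h)).le
  have hcentred : 0 < ∫ v, g v * ⟪v - c, T (v - c)⟫ ∂μ := by
    refine (integral_pos_iff_support_of_nonneg hq
      (hg2.mul_inner_sub_apply_sub_of_one_add_norm_sq_mul T c)).2 ?_
    obtain ⟨w, hw⟩ := exists_ne c
    refine (isOpen_compl_singleton.measure_pos μ ⟨w, hw⟩).trans_le (measure_mono fun v hv => ?_)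
    exact (mul_pos (hg v) (hT _ (sub_ne_zero.2 hv))).ne'
  rw [integral_mul_inner_sub_apply_sub T hg2 c, ← hn_def, ← hp_def] at hcentred
  simp only [c, map_smul, real_inner_smul_left, real_inner_smul_right, real_inner_comm p]
    at hcentred
  field_simp at hcentred
  linarith

theorem integral_mul_integral_inner_sub_inner_integral_pos [Nontrivial E] [μ.IsOpenPosMeasure]
    (T : E →L[ℝ] E) (hT : ∀ x ≠ 0, 0 < ⟪x, T x⟫) (hg : ∀ v, 0 < g v)
    (hg2 : Integrable (fun v => (1 + ‖v‖) ^ 2 * g v) μ) (u : E) :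
    0 < (∫ v, g v ∂μ) * (∫ v, g v * ⟪v, T (v - u)⟫ ∂μ)
      - ⟪∫ v, g v • T (v - u) ∂μ, ∫ v, g v • v ∂μ⟫ := by
  have h0 := hg2.of_one_add_norm_sq_mul
  have h1 := hg2.smul_id_of_one_add_norm_sq_mul
  have h2 : Integrable (fun v => g v * ⟪v, T v⟫) μ := by
    simpa using hg2.mul_inner_sub_apply_sub_of_one_add_norm_sq_mul T 0
  have hA : ∫ v, g v • T (v - u) ∂μ = T (∫ v, g v • v ∂μ) - (∫ v, g v ∂μ) • T u := by
    have hpt : ∀ v, g v • T (v - u) = T (g v • v) - g v • T u := fun v => by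
      rw [map_sub, smul_sub, map_smul]
    simp_rw [hpt]
    rw [integral_sub (T.integrable_comp h1) (h0.smul_const _), T.integral_comp_comm h1,
      integral_smul_const]
  have hB : ∫ v, g v * ⟪v, T (v - u)⟫ ∂μ = ∫ v, g v * ⟪v, T v⟫ ∂μ - ⟪T u, ∫ v, g v • v ∂μ⟫ := by
    have hpt : ∀ v, g v * ⟪v, T (v - u)⟫ = g v * ⟪v, T v⟫ - ⟪T u, g v • v⟫ := fun v => by
      rw [map_sub, inner_sub_right, real_inner_smul_right, real_inner_comm v]
      ring
    simp_rw [hpt]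
    rw [integral_sub h2 (h1.const_inner _), integral_inner h1]
  rw [hA, hB, inner_sub_left, real_inner_smul_left]
  have := inner_integral_smul_apply_lt_integral_mul_integral T hT hg hg2
  linarith [real_inner_comm (∫ v, g v • v ∂μ) (T (∫ v, g v • v ∂μ))]

end WeightedVariance

theorem one_add_sq_mul_exp_neg_mul_sq_le {b : ℝ} (hb : 0 < b) (t : ℝ) :
    (1 + t) ^ 2 * Real.exp (-b * t ^ 2) ≤ (2 + 4 / b) * Real.exp (-(b / 2) * t ^ 2) := by
  have hexp : Real.exp (-b * t ^ 2)
      = Real.exp (-(b / 2) * t ^ 2) * (Real.exp (b / 2 * t ^ 2))⁻¹ := by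
    rw [← Real.exp_neg, ← Real.exp_add]; ring_nf
  have hpoly : (1 + t) ^ 2 ≤ (2 + 4 / b) * Real.exp (b / 2 * t ^ 2) := by
    have h1 : b / 2 * t ^ 2 + 1 ≤ Real.exp (b / 2 * t ^ 2) := Real.add_one_le_exp _
    have h2 : 4 / b * (b / 2 * t ^ 2) = 2 * t ^ 2 := by field_simp; ring
    nlinarith [sq_nonneg (1 - t), sq_nonneg t, div_pos (by norm_num : (0:ℝ) < 4) hb]
  rw [hexp, mul_comm (Real.exp _), ← mul_assoc]
  refine mul_le_mul_of_nonneg_right ?_ (Real.exp_pos _).le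
  rw [mul_inv_le_iff₀ (Real.exp_pos _)]
  exact hpoly

theorem exists_pos_mul_sq_norm_le_inner_apply {V : Type*} [NormedAddCommGroup V]
    [InnerProductSpace ℝ V] [FiniteDimensional ℝ V] (T : V →L[ℝ] V) (hT : ∀ x ≠ 0, 0 < ⟪x, T x⟫) :
    ∃ c > 0, ∀ x, c * ‖x‖ ^ 2 ≤ ⟪x, T x⟫ := by
  rcases subsingleton_or_nontrivial V with hV | hV
  · exact ⟨1, one_pos, fun x => by simp [Subsingleton.elim x 0]⟩
  obtain ⟨x₀, hx₀, hmin⟩ := (isCompact_sphere (0 : V) 1).exists_isMinOn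
    (NormedSpace.sphere_nonempty.2 zero_le_one)
    (by fun_prop : Continuous fun x => ⟪x, T x⟫).continuousOn
  refine ⟨⟪x₀, T x₀⟫, hT _ (ne_zero_of_mem_unit_sphere ⟨x₀, hx₀⟩), fun x => ?_⟩
  rcases eq_or_ne x 0 with rfl | hx
  · simp
  have hnx : ‖x‖ ≠ 0 := norm_ne_zero_iff.2 hx
  have hy : ‖x‖⁻¹ • x ∈ Metric.sphere (0 : V) 1 := by
    simp [norm_smul, hnx]
  have hle : ⟪x₀, T x₀⟫ ≤ ⟪‖x‖⁻¹ • x, T (‖x‖⁻¹ • x)⟫ := hmin hy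
  rw [map_smul, real_inner_smul_left, real_inner_smul_right] at hle
  calc ⟪x₀, T x₀⟫ * ‖x‖ ^ 2 ≤ ‖x‖⁻¹ * (‖x‖⁻¹ * ⟪x, T x⟫) * ‖x‖ ^ 2 := by gcongr
    _ = ⟪x, T x⟫ := by field_simp

section Gaussian

variable {V : Type*} [NormedAddCommGroup V] [InnerProductSpace ℝ V] [FiniteDimensional ℝ V]
  [MeasurableSpace V] [BorelSpace V]

theorem integrable_exp_neg_mul_sq_norm {b : ℝ} (hb : 0 < b) :
    Integrable fun v : V => Real.exp (-b * ‖v‖ ^ 2) :=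
  Integrable.of_integral_ne_zero <| by
    rw [GaussianFourier.integral_rexp_neg_mul_sq_norm hb]; positivity

theorem integrable_one_add_norm_sq_mul_exp_neg_mul_sq_norm_sub {b : ℝ} (hb : 0 < b) (u : V) :
    Integrable fun v : V => (1 + ‖v‖) ^ 2 * Real.exp (-b * ‖v - u‖ ^ 2) := by
  refine (((integrable_exp_neg_mul_sq_norm (half_pos hb)).comp_sub_right u).const_mul
    ((1 + ‖u‖) ^ 2 * (2 + 4 / b))).mono' (by fun_prop) (ae_of_all _ fun v => ?_)
  have hv : 1 + ‖v‖ ≤ (1 + ‖u‖) * (1 + ‖v - u‖) := by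
    nlinarith [norm_le_norm_sub_add v u, norm_nonneg u, norm_nonneg (v - u)]
  rw [Real.norm_of_nonneg (by positivity)]
  calc (1 + ‖v‖) ^ 2 * Real.exp (-b * ‖v - u‖ ^ 2)
      ≤ (1 + ‖u‖) ^ 2 * ((1 + ‖v - u‖) ^ 2 * Real.exp (-b * ‖v - u‖ ^ 2)) := by
        rw [← mul_assoc, ← mul_pow]; gcongr
    _ ≤ (1 + ‖u‖) ^ 2 * ((2 + 4 / b) * Real.exp (-(b / 2) * ‖v - u‖ ^ 2)) := by
        exact mul_le_mul_of_nonneg_left (one_add_sq_mul_exp_neg_mul_sq_le hb _) (by positivity)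
    _ = _ := by ring

theorem integrable_one_add_norm_sq_mul_exp_neg_inner_apply (T : V →L[ℝ] V)
    (hT : ∀ x ≠ 0, 0 < ⟪x, T x⟫) (u : V) :
    Integrable fun v : V => (1 + ‖v‖) ^ 2 * Real.exp (-(1 / 2) * ⟪v - u, T (v - u)⟫) := by
  obtain ⟨c, hc, hcT⟩ := exists_pos_mul_sq_norm_le_inner_apply T hT
  refine (integrable_one_add_norm_sq_mul_exp_neg_mul_sq_norm_sub (half_pos hc) u).mono'
    (by fun_prop) (ae_of_all _ fun v => ?_)
  rw [Real.norm_of_nonneg (by positivity)]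
  exact mul_le_mul_of_nonneg_left (Real.exp_le_exp.2 (by linarith [hcT (v - u)])) (by positivity)

end Gaussian

theorem hasGradientAt_mul_exp_neg_inner_apply {E : Type*} [NormedAddCommGroup E]
    [InnerProductSpace ℝ E] [CompleteSpace E] (T : E →L[ℝ] E) (hT : (T : E →ₗ[ℝ] E).IsSymmetric)
    (C : ℝ) (u v : E) :
    HasGradientAt (fun w => C * Real.exp (-(1 / 2) * ⟪w - u, T (w - u)⟫))
      (-(C * Real.exp (-(1 / 2) * ⟪v - u, T (v - u)⟫)) • T (v - u)) v := by
  have hsub : HasFDerivAt (fun w => w - u) (ContinuousLinearMap.id ℝ E) v :=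
    (hasFDerivAt_id v).sub_const u
  have hq := hsub.inner ℝ (T.hasFDerivAt.comp v hsub)
  rw [hasGradientAt_iff_hasFDerivAt]
  refine (((hq.const_mul (-(1 / 2))).exp).const_mul C).congr_fderiv ?_
  ext h
  have hsym : ⟪v - u, T h⟫ = ⟪T (v - u), h⟫ := (hT _ _).symm
  simp only [FunLike.coe_smul, Pi.smul_apply, ContinuousLinearMap.comp_apply,
    ContinuousLinearMap.prod_apply, ContinuousLinearMap.coe_id', id_eq, Function.comp_apply,
    fderivInnerCLM_apply, InnerProductSpace.toDual_apply_apply, smul_eq_mul, hsym,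
    real_inner_smul_right, real_inner_comm h]
  ring

theorem Matrix.PosDef.inner_toEuclideanCLM_self_pos {n : Type*} [Fintype n] [DecidableEq n]
    {S : Matrix n n ℝ} (hS : S.PosDef) {x : EuclideanSpace ℝ n} (hx : x ≠ 0) :
    0 < ⟪x, Matrix.toEuclideanCLM (𝕜 := ℝ) S x⟫ := by
  rw [Matrix.inner_toEuclideanCLM]
  simpa using hS.dotProduct_mulVec_pos (x := WithLp.ofLp x) (by simpa using hx)

/-- Positivity of the denominator n_β·B_β − A_β·p_β of the effective
temperature for a multivariate Gaussian distribution and a continuous,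
bounded, strictly positive weight β. -/
theorem stmt11 (d : ℕ) (hd : 1 ≤ d)
    (S : Matrix (Fin d) (Fin d) ℝ) (hS : S.PosDef)
    (u : EuclideanSpace ℝ (Fin d)) (C : ℝ) (hC : 0 < C)
    (f : EuclideanSpace ℝ (Fin d) → ℝ)
    (hf : ∀ v, f v =
      C * Real.exp (-(1 / 2) * ⟪v - u, Matrix.toEuclideanLin S⁻¹ (v - u)⟫))
    (β : EuclideanSpace ℝ (Fin d) → ℝ)
    (hβc : Continuous β) (hβb : ∃ M, ∀ v, |β v| ≤ M) (hβpos : ∀ v, 0 < β v)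
    (nβ Bβ : ℝ) (Aβ pβ : EuclideanSpace ℝ (Fin d))
    (hn : nβ = ∫ v, β v * f v)
    (hp : pβ = ∫ v, (β v * f v) • v)
    (hA : Aβ = -∫ v, β v • gradient f v)
    (hB : Bβ = -∫ v, β v * ⟪v, gradient f v⟫) :
    0 < nβ * Bβ - ⟪Aβ, pβ⟫ := by
  have : Nontrivial (EuclideanSpace ℝ (Fin d)) := by
    have : Nonempty (Fin d) := ⟨⟨0, hd⟩⟩
    infer_instance
  set T := Matrix.toEuclideanCLM (𝕜 := ℝ) S⁻¹
  have hT : ∀ x ≠ 0, 0 < ⟪x, T x⟫ := fun x hx => hS.inv.inner_toEuclideanCLM_self_pos hx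
  have hf' : f = fun v => C * Real.exp (-(1 / 2) * ⟪v - u, T (v - u)⟫) := funext hf
  have hgrad : ∀ v, gradient f v = -f v • T (v - u) := fun v => by
    rw [hf', (hasGradientAt_mul_exp_neg_inner_apply T
      (Matrix.isSymmetric_toEuclideanLin_iff.2 hS.inv.isHermitian) C u v).gradient]
  obtain ⟨M, hM⟩ := hβb
  have hg2 : Integrable fun v => (1 + ‖v‖) ^ 2 * (β v * f v) := by
    refine (((integrable_one_add_norm_sq_mul_exp_neg_inner_apply T hT u).const_mul C).bdd_mul
      hβc.aestronglyMeasurable (ae_of_all _ hM)).congr (ae_of_all _ fun v => ?_)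
    simp only [congrFun hf' v]
    ring
  have hA' : Aβ = ∫ v, (β v * f v) • T (v - u) := by
    simp_rw [hA, hgrad, smul_smul, mul_neg, neg_smul, integral_neg, neg_neg]
  have hB' : Bβ = ∫ v, (β v * f v) * ⟪v, T (v - u)⟫ := by
    simp_rw [hB, hgrad, real_inner_smul_right, neg_mul, mul_neg, integral_neg, neg_neg, mul_assoc]
  rw [hn, hp, hA', hB']
  exact integral_mul_integral_inner_sub_inner_integral_pos T hT
    (fun v => mul_pos (hβpos v) (by rw [hf v]; positivity)) hg2 u
end

section
/- Let d ≥ 1, n_M > 0, u ∈ ℝᵈ, v_th > 0, and let f^M(v) = n_M·(2π)^{−d/2}·v_th^{−d}·exp(−|v − u|²/(2v_th²)) be the Maxwellian. Let β : ℝᵈ → ℝ be continuous, bounded, and strictly positive everywhere, and define n_β = ∫ β f^M dv, p_β = ∫ v β f^M dv, E_β = ∫ |v|² β f^M dv, A_β = −∫ β ∇f^M dv, B_β = −∫ β (v·∇f^M) dv. Then the conservative penalization parameters λ_β = (n_β·E_β − |p_β|²)/(n_β·B_β − A_β·p_β) and u_β = (p_β − λ_β·A_β)/n_β satisfy λ_β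 = v_th² and u_β = u, and consequently the penalization flux vanishes identically: β(v)·(∇f^M(v) + ((v − u_β)/λ_β)·f^M(v)) = 0 for all v ∈ ℝᵈ. -/
/-!
Since `∇f^M(v) = -(v - u) f^M(v) / v_th²`, the gradient moments reduce to plain moments of the
weight `g = β f^M`: `A_β = (p_β - n_β u) / v_th²` and `B_β = (E_β - ⟪u, p_β⟫) / v_th²`. Hence the
denominator of `λ_β` is `v_th⁻²` times its numerator `n_β E_β - |p_β|²`, and that numerator is
`n_β` times the `g`-variance `∫ g |v - p_β / n_β|²`, positive because `g > 0` and `d ≥ 1`. So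
`λ_β = v_th²`, then `u_β = u`, and the flux vanishes because the Lenard–Bernstein flux with the
Maxwellian's own drift and temperature annihilates it.
-/

open MeasureTheory Real
open scoped RealInnerProductSpace

variable {E : Type*} [NormedAddCommGroup E]

theorem mul_exp_neg_mul_le {b : ℝ} (hb : 0 < b) (t : ℝ) :
    t * exp (-b * t) ≤ 2 / b * exp (-(b / 2) * t) := by
  have hsplit : exp (-b * t) = exp (-(b / 2) * t) * exp (-(b / 2) * t) := by
    rw [← exp_add]; ring_nf
  have hle : b / 2 * t ≤ exp (b / 2 * t) := by linarith [add_one_le_exp (b / 2 * t)]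
  calc t * exp (-b * t) = 2 / b * (b / 2 * t * exp (-(b / 2) * t)) * exp (-(b / 2) * t) := by
        rw [hsplit]; field_simp
    _ ≤ 2 / b * (exp (b / 2 * t) * exp (-(b / 2) * t)) * exp (-(b / 2) * t) := by
        gcongr
    _ = 2 / b * exp (-(b / 2) * t) := by rw [← exp_add]; simp

/-- Amplitude `c` (the normalisation of `f^M`) and temperature `t = v_th²`. -/
noncomputable def maxwellian (c t : ℝ) (u v : E) : ℝ :=
  c * exp (-‖v - u‖ ^ 2 / (2 * t))

theorem maxwellian_eq_mul_exp_neg_mul (c t : ℝ) (u v : E) :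
    maxwellian c t u v = c * exp (-(2 * t)⁻¹ * ‖v - u‖ ^ 2) := by
  rw [maxwellian, neg_mul, ← div_eq_inv_mul, neg_div]

@[fun_prop]
theorem continuous_maxwellian (c t : ℝ) (u : E) : Continuous (maxwellian c t u) := by
  unfold maxwellian
  fun_prop

theorem maxwellian_pos {c : ℝ} (hc : 0 < c) (t : ℝ) (u v : E) : 0 < maxwellian c t u v :=
  mul_pos hc (exp_pos _)

variable [InnerProductSpace ℝ E]

section Gaussian

variable [FiniteDimensional ℝ E] [MeasurableSpace E] [BorelSpace E]

theorem integrable_exp_neg_mul_norm_sub_sq {b : ℝ} (hb : 0 < b) (u : E) :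
    Integrable fun v => exp (-b * ‖v - u‖ ^ 2) := by
  have h := (GaussianFourier.integrable_cexp_neg_mul_sq_norm_add (V := E) (b := b)
    (by simpa using hb) 0 0).norm
  have h0 : Integrable fun v : E => exp (-b * ‖v‖ ^ 2) := by
    refine h.congr (Filter.Eventually.of_forall fun v => ?_)
    simp [Complex.norm_exp, ← Complex.ofReal_pow]
  exact h0.comp_sub_right u

theorem integrable_norm_sq_mul_exp_neg_mul_norm_sub_sq {b : ℝ} (hb : 0 < b) (u : E) :
    Integrable fun v => ‖v‖ ^ 2 * exp (-b * ‖v - u‖ ^ 2) := by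
  refine (((integrable_exp_neg_mul_norm_sub_sq (half_pos hb) u).const_mul (2 * (2 / b))).add
    ((integrable_exp_neg_mul_norm_sub_sq hb u).const_mul (2 * ‖u‖ ^ 2))).mono'
    (by fun_prop) (Filter.Eventually.of_forall fun v => ?_)
  have hv : ‖v‖ ^ 2 ≤ 2 * ‖v - u‖ ^ 2 + 2 * ‖u‖ ^ 2 := by
    have := norm_le_norm_sub_add v u
    nlinarith [norm_nonneg (v - u), norm_nonneg u, norm_nonneg v, sq_nonneg (‖v - u‖ - ‖u‖)]
  have hexp := mul_exp_neg_mul_le hb (‖v - u‖ ^ 2)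
  rw [norm_mul, norm_pow, norm_norm, norm_of_nonneg (exp_pos _).le, Pi.add_apply]
  nlinarith [exp_pos (-b * ‖v - u‖ ^ 2)]

theorem integrable_bdd_mul_maxwellian {β : E → ℝ} {M t : ℝ} (hβ : AEStronglyMeasurable β)
    (hM : ∀ v, ‖β v‖ ≤ M) (ht : 0 < t) (c : ℝ) (u : E) :
    Integrable fun v => β v * maxwellian c t u v := by
  have hb : 0 < (2 * t)⁻¹ := by positivity
  simp_rw [maxwellian_eq_mul_exp_neg_mul]
  exact ((integrable_exp_neg_mul_norm_sub_sq hb u).const_mul c).bdd_mul hβ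
    (Filter.Eventually.of_forall hM)

theorem integrable_norm_sq_mul_bdd_mul_maxwellian {β : E → ℝ} {M t : ℝ}
    (hβ : AEStronglyMeasurable β) (hM : ∀ v, ‖β v‖ ≤ M) (ht : 0 < t) (c : ℝ) (u : E) :
    Integrable fun v => ‖v‖ ^ 2 * (β v * maxwellian c t u v) := by
  have hb : 0 < (2 * t)⁻¹ := by positivity
  simp_rw [maxwellian_eq_mul_exp_neg_mul]
  refine (((integrable_norm_sq_mul_exp_neg_mul_norm_sub_sq hb u).const_mul c).bdd_mul hβ
    (Filter.Eventually.of_forall hM)).congr (Filter.Eventually.of_forall fun v => ?_)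
  ring

end Gaussian

theorem hasGradientAt_maxwellian [CompleteSpace E] (c t : ℝ) (u x : E) :
    HasGradientAt (maxwellian c t u) ((-(t⁻¹ * maxwellian c t u x)) • (x - u)) x := by
  have h : HasFDerivAt (fun v => c * exp (-(2 * t)⁻¹ * ‖v - u‖ ^ 2)) _ x :=
    (((hasFDerivAt_id x).sub_const u).norm_sq.const_mul _).exp.const_mul c
  simp_rw [funext (maxwellian_eq_mul_exp_neg_mul c t u), hasGradientAt_iff_hasFDerivAt]
  refine h.congr_fderiv ?_
  ext y
  simp only [mul_inv_rev, id_eq, neg_mul, map_sub, ContinuousLinearMap.comp_id, neg_smul,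
    smul_neg, neg_apply, smul_apply, sub_apply, coe_innerSL_apply, nsmul_eq_mul, Nat.cast_ofNat,
    smul_eq_mul, map_neg, map_smul, InnerProductSpace.toDual_apply_apply, neg_inj]
  ring

theorem mul_norm_sub_sq_eq (c : ℝ) (v m : E) :
    c * ‖v - m‖ ^ 2 = ‖v‖ ^ 2 * c - 2 * ⟪m, c • v⟫ + ‖m‖ ^ 2 * c := by
  rw [norm_sub_sq_real, real_inner_smul_right, real_inner_comm]
  ring

section Moments

variable [MeasurableSpace E] {μ : Measure E} {g : E → ℝ}

theorem MeasureTheory.Integrable.smul_id_of_norm_sq_mul [OpensMeasurableSpace E]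
    [SecondCountableTopology E] (hg : Integrable g μ)
    (hg2 : Integrable (fun v => ‖v‖ ^ 2 * g v) μ) : Integrable (fun v => g v • v) μ := by
  refine (hg.norm.add hg2.norm).mono' (hg.aestronglyMeasurable.smul aestronglyMeasurable_id)
    (Filter.Eventually.of_forall fun v => ?_)
  have hv : ‖v‖ ≤ 1 + ‖v‖ ^ 2 := by nlinarith [sq_nonneg (‖v‖ - 1)]
  rw [norm_smul, Pi.add_apply, norm_mul, norm_pow, norm_norm]
  nlinarith [norm_nonneg (g v)]

theorem MeasureTheory.Integrable.mul_norm_sub_sq (hg : Integrable g μ)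
    (hg1 : Integrable (fun v => g v • v) μ) (hg2 : Integrable (fun v => ‖v‖ ^ 2 * g v) μ)
    (m : E) : Integrable (fun v => g v * ‖v - m‖ ^ 2) μ := by
  simp_rw [mul_norm_sub_sq_eq _ _ m]
  exact (hg2.sub ((hg1.const_inner m).const_mul 2)).add (hg.const_mul _)

variable [CompleteSpace E]

theorem integral_smul_sub (hg : Integrable g μ) (hg1 : Integrable (fun v => g v • v) μ) (u : E) :
    ∫ v, g v • (v - u) ∂μ = ∫ v, g v • v ∂μ - (∫ v, g v ∂μ) • u := by
  simp_rw [smul_sub]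
  rw [integral_sub hg1 (hg.smul_const u), integral_smul_const]

theorem integral_mul_inner_sub (hg1 : Integrable (fun v => g v • v) μ)
    (hg2 : Integrable (fun v => ‖v‖ ^ 2 * g v) μ) (u : E) :
    ∫ v, g v * ⟪v, v - u⟫ ∂μ = ∫ v, ‖v‖ ^ 2 * g v ∂μ - ⟪u, ∫ v, g v • v ∂μ⟫ := by
  have h : ∀ v, g v * ⟪v, v - u⟫ = ‖v‖ ^ 2 * g v - ⟪u, g v • v⟫ := fun v => by
    rw [inner_sub_right, real_inner_self_eq_norm_sq, real_inner_smul_right, real_inner_comm]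
    ring
  simp_rw [h]
  rw [integral_sub hg2 (hg1.const_inner u), integral_inner hg1]

theorem integral_mul_norm_sub_sq (hg : Integrable g μ) (hg1 : Integrable (fun v => g v • v) μ)
    (hg2 : Integrable (fun v => ‖v‖ ^ 2 * g v) μ) (m : E) :
    ∫ v, g v * ‖v - m‖ ^ 2 ∂μ =
      ∫ v, ‖v‖ ^ 2 * g v ∂μ - 2 * ⟪m, ∫ v, g v • v ∂μ⟫ + ‖m‖ ^ 2 * ∫ v, g v ∂μ := by
  have hcross : Integrable (fun v => 2 * ⟪m, g v • v⟫) μ := (hg1.const_inner m).const_mul 2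
  have hdiff : Integrable (fun v => ‖v‖ ^ 2 * g v - 2 * ⟪m, g v • v⟫) μ := hg2.sub hcross
  simp_rw [mul_norm_sub_sq_eq _ _ m]
  rw [integral_add hdiff (hg.const_mul _), integral_sub hg2 hcross, integral_const_mul,
    integral_const_mul, integral_inner hg1]

theorem sq_norm_integral_smul_id_lt [OpensMeasurableSpace E] [SecondCountableTopology E]
    [Nontrivial E] [μ.IsOpenPosMeasure] (hgc : Continuous g)
    (hpos : ∀ v, 0 < g v) (hg : Integrable g μ) (hg2 : Integrable (fun v => ‖v‖ ^ 2 * g v) μ) :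
    ‖∫ v, g v • v ∂μ‖ ^ 2 < (∫ v, g v ∂μ) * ∫ v, ‖v‖ ^ 2 * g v ∂μ := by
  have hg1 := hg.smul_id_of_norm_sq_mul hg2
  have hn : 0 < ∫ v, g v ∂μ :=
    integral_pos_of_integrable_nonneg_nonzero hgc hg (fun v => (hpos v).le) (hpos 0).ne'
  -- `n ∫ g ‖v - m‖² = n E - ‖p‖²` at the barycentre `m = p / n`
  set m := (∫ v, g v ∂μ)⁻¹ • ∫ v, g v • v ∂μ
  obtain ⟨w, hw⟩ := exists_ne m
  have hvar : 0 < ∫ v, g v * ‖v - m‖ ^ 2 ∂μ :=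
    integral_pos_of_integrable_nonneg_nonzero (x := w) (by fun_prop)
      (hg.mul_norm_sub_sq hg1 hg2 m)
      (fun v => mul_nonneg (hpos v).le (sq_nonneg _))
      (mul_ne_zero (hpos w).ne' (pow_ne_zero 2 (norm_ne_zero_iff.2 (sub_ne_zero.2 hw))))
  rw [integral_mul_norm_sub_sq hg hg1 hg2, real_inner_smul_left, real_inner_self_eq_norm_sq,
    norm_smul, norm_inv, norm_of_nonneg hn.le] at hvar
  field_simp at hvar
  linarith

end Moments

section GaussianGradient

variable [MeasurableSpace E] [CompleteSpace E] {μ : Measure E} {f β : E → ℝ} {t : ℝ} {u : E}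

theorem neg_integral_smul_gradient (hgrad : ∀ v, gradient f v = (-(t⁻¹ * f v)) • (v - u))
    (hg : Integrable (fun v => β v * f v) μ) (hg1 : Integrable (fun v => (β v * f v) • v) μ) :
    -∫ v, β v • gradient f v ∂μ =
      t⁻¹ • (∫ v, (β v * f v) • v ∂μ - (∫ v, β v * f v ∂μ) • u) := by
  have h : ∀ v, β v • gradient f v = -t⁻¹ • ((β v * f v) • (v - u)) := fun v => by
    rw [hgrad, smul_smul, smul_smul]
    ring_nf
  simp_rw [h, integral_smul, integral_smul_sub hg hg1, neg_smul, neg_neg]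

theorem neg_integral_mul_inner_gradient (hgrad : ∀ v, gradient f v = (-(t⁻¹ * f v)) • (v - u))
    (hg1 : Integrable (fun v => (β v * f v) • v) μ)
    (hg2 : Integrable (fun v => ‖v‖ ^ 2 * (β v * f v)) μ) :
    -∫ v, β v * ⟪v, gradient f v⟫ ∂μ =
      t⁻¹ * (∫ v, ‖v‖ ^ 2 * (β v * f v) ∂μ - ⟪u, ∫ v, (β v * f v) • v ∂μ⟫) := by
  have h : ∀ v, β v * ⟪v, gradient f v⟫ = -t⁻¹ * ((β v * f v) * ⟪v, v - u⟫) := fun v => by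
    rw [hgrad, real_inner_smul_right]
    ring
  simp_rw [h, integral_const_mul, integral_mul_inner_sub hg1 hg2, neg_mul, neg_neg]

end GaussianGradient

/-- `λ_β` and `u_β` in terms of the moments `n_β, E_β, B_β, p_β, A_β`. -/
noncomputable def penalizationTemperature (n En B : ℝ) (p A : E) : ℝ :=
  (n * En - ‖p‖ ^ 2) / (n * B - ⟪A, p⟫)

noncomputable def penalizationDrift (n l : ℝ) (p A : E) : E :=
  (1 / n) • (p - l • A)

theorem penalizationTemperature_eq {n En B t : ℝ} {p A u : E}
    (hvar : n * En - ‖p‖ ^ 2 ≠ 0) (hA : A = t⁻¹ • (p - n • u)) (hB : B = t⁻¹ * (En - ⟪u, p⟫)) :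
    penalizationTemperature n En B p A = t := by
  have hden : n * B - ⟪A, p⟫ = t⁻¹ * (n * En - ‖p‖ ^ 2) := by
    rw [hA, hB, real_inner_smul_left, inner_sub_left, real_inner_smul_left,
      real_inner_self_eq_norm_sq, real_inner_comm]
    ring
  rw [penalizationTemperature, hden, div_mul_cancel_right₀ hvar, inv_inv]

theorem penalizationDrift_eq {n t : ℝ} {p A u : E} (ht : t ≠ 0) (hn : n ≠ 0)
    (hA : A = t⁻¹ • (p - n • u)) : penalizationDrift n t p A = u := by
  rw [penalizationDrift, hA, smul_smul, mul_inv_cancel₀ ht, one_smul, sub_sub_cancel, smul_smul,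
    one_div, inv_mul_cancel₀ hn, one_smul]

/-- Null-space (equilibrium) preservation of the conservative penalization
operator: for the Maxwellian f^M, the conservative parameters satisfy
λ_β = v_th² and u_β = u, hence the penalization flux vanishes identically. -/
theorem stmt14 (d : ℕ) (hd : 1 ≤ d)
    (n_M : ℝ) (hn_M : 0 < n_M) (u : EuclideanSpace ℝ (Fin d))
    (v_th : ℝ) (hv_th : 0 < v_th)
    (fM : EuclideanSpace ℝ (Fin d) → ℝ)
    (hfM : ∀ v, fM v = n_M * (2 * Real.pi) ^ (-(d : ℝ) / 2) * v_th ^ (-(d : ℤ)) *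
      Real.exp (-‖v - u‖ ^ 2 / (2 * v_th ^ 2)))
    (β : EuclideanSpace ℝ (Fin d) → ℝ)
    (hβc : Continuous β) (hβb : ∃ M, ∀ v, |β v| ≤ M) (hβpos : ∀ v, 0 < β v)
    (nβ Eβ Bβ : ℝ) (Aβ pβ : EuclideanSpace ℝ (Fin d))
    (hn : nβ = ∫ v, β v * fM v)
    (hp : pβ = ∫ v, (β v * fM v) • v)
    (hE : Eβ = ∫ v, ‖v‖ ^ 2 * (β v * fM v))
    (hA : Aβ = -∫ v, β v • gradient fM v)
    (hB : Bβ = -∫ v, β v * ⟪v, gradient fM v⟫)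
    (lβ : ℝ) (hl : lβ = (nβ * Eβ - ‖pβ‖ ^ 2) / (nβ * Bβ - ⟪Aβ, pβ⟫))
    (uβ : EuclideanSpace ℝ (Fin d)) (hu : uβ = (1 / nβ) • (pβ - lβ • Aβ)) :
    lβ = v_th ^ 2 ∧ uβ = u ∧
    ∀ v : EuclideanSpace ℝ (Fin d),
      β v • (gradient fM v + lβ⁻¹ • (fM v • (v - uβ))) = 0 := by
  obtain ⟨M, hM⟩ := hβb
  set c := n_M * (2 * π) ^ (-(d : ℝ) / 2) * v_th ^ (-(d : ℤ))
  have hfM_eq : fM = maxwellian c (v_th ^ 2) u := funext hfM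
  have hgrad : ∀ v, gradient fM v = (-((v_th ^ 2)⁻¹ * fM v)) • (v - u) := fun v => by
    rw [hfM_eq, (hasGradientAt_maxwellian c _ u v).gradient]
  have hg : Integrable fun v => β v * fM v :=
    hfM_eq ▸ integrable_bdd_mul_maxwellian hβc.aestronglyMeasurable hM (by positivity) c u
  have hg2 : Integrable fun v => ‖v‖ ^ 2 * (β v * fM v) :=
    hfM_eq ▸ integrable_norm_sq_mul_bdd_mul_maxwellian hβc.aestronglyMeasurable hM
      (by positivity) c u
  have hg1 := hg.smul_id_of_norm_sq_mul hg2
  have hpos : ∀ v, 0 < β v * fM v := fun v =>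
    mul_pos (hβpos v) (hfM_eq ▸ maxwellian_pos (by positivity) _ u v)
  have hgc : Continuous fun v => β v * fM v := hβc.mul (hfM_eq ▸ continuous_maxwellian _ _ u)
  have : Nonempty (Fin d) := ⟨⟨0, hd⟩⟩
  have hn_pos : 0 < nβ := hn ▸
    integral_pos_of_integrable_nonneg_nonzero hgc hg (fun v => (hpos v).le) (hpos 0).ne'
  have hvar : 0 < nβ * Eβ - ‖pβ‖ ^ 2 := by
    rw [hn, hE, hp]
    linarith [sq_norm_integral_smul_id_lt hgc hpos hg hg2 (μ := volume)]
  have hA' : Aβ = (v_th ^ 2)⁻¹ • (pβ - nβ • u) := by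
    rw [hA, hp, hn, neg_integral_smul_gradient hgrad hg hg1]
  have hB' : Bβ = (v_th ^ 2)⁻¹ * (Eβ - ⟪u, pβ⟫) := by
    rw [hB, hE, hp, neg_integral_mul_inner_gradient hgrad hg1 hg2]
  have hl' : lβ = v_th ^ 2 := by
    rw [hl]
    exact penalizationTemperature_eq hvar.ne' hA' hB'
  have hu' : uβ = u := by
    rw [hu, hl']
    exact penalizationDrift_eq (by positivity) hn_pos.ne' hA'
  refine ⟨hl', hu', fun v => ?_⟩
  rw [hgrad, hl', hu', smul_smul, ← add_smul, neg_add_cancel, zero_smul, smul_zero]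
end

section
/- Let d ≥ 1, let f : ℝᵈ → ℝ be a Schwartz function, let β : ℝᵈ → ℝ be continuously differentiable with compact support, and define n_β = ∫ β f dv, p_β = ∫ v β f dv, E_β = ∫ |v|² β f dv, A_β = −∫ β ∇f dv, B_β = −∫ β (v·∇f) dv. Assume n_β ≠ 0, n_β·B_β − A_β·p_β ≠ 0, and λ_β := (n_β·E_β − |p_β|²)/(n_β·B_β − A_β·p_β) ≠ 0, and set u_β = (p_β − λ_β·A_β)/n_β. Then the penalization operator L_β(f)(v) = div_v(β(v)·[∇f(v) + ((v − u_β)/λ_β)·f(v)]) satisfies ∫ v·L_β(f)(v) dv = 0 (componentwise) and ∫ |v|²·L_β(f)(v) dv = 0. -/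
/-! Green's formula turns the first and second moments of `div F`, for a compactly supported
`C¹` flux `F`, into `-∫ F` and `-2 ∫ ⟪v, F v⟫`. For the flux of `L_β` both are affine in the
β-weighted moments, and the conservative `λ_β`, `u_β` are exactly the solutions of
`p_β - n_β u_β = λ_β A_β` and `E_β - ⟪u_β, p_β⟫ = λ_β B_β`, which make them vanish. -/

open MeasureTheory
open scoped RealInnerProductSpace

section Divergence

variable {E : Type*} [NormedAddCommGroup E] [InnerProductSpace ℝ E]

noncomputable def divergence (F : E → E) (v : E) : ℝ :=
  LinearMap.trace ℝ E (fderiv ℝ F v).toLinearMap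

lemma divergence_eq_sum_fderiv_inner {ι : Type*} [Fintype ι] (b : OrthonormalBasis ι ℝ E)
    {F : E → E} {v : E} (hF : DifferentiableAt ℝ F v) :
    divergence F v = ∑ i, fderiv ℝ (fun w ↦ ⟪b i, F w⟫) v (b i) := by
  rw [divergence, LinearMap.trace_eq_sum_inner _ b]
  refine Fintype.sum_congr _ _ fun i ↦ ?_
  rw [fderiv_inner_apply ℝ (differentiableAt_const _) hF]
  simp

lemma continuous_divergence [FiniteDimensional ℝ E] {F : E → E} (hF : ContDiff ℝ 1 F) :
    Continuous (divergence F) :=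
  (LinearMap.continuous_of_finiteDimensional
    ((LinearMap.trace ℝ E).comp (ContinuousLinearMap.coeLM ℝ))).comp
    (hF.continuous_fderiv one_ne_zero)

lemma HasCompactSupport.divergence {F : E → E} (hFs : HasCompactSupport F) :
    HasCompactSupport (divergence F) :=
  (hFs.fderiv ℝ).comp_left (g := fun T : E →L[ℝ] E ↦ LinearMap.trace ℝ E T.toLinearMap)
    (map_zero _)

variable [FiniteDimensional ℝ E] [MeasurableSpace E] [BorelSpace E] {μ : Measure E}
  [μ.IsAddHaarMeasure]

lemma integral_mul_fderiv_eq_neg_of_hasCompactSupport {φ g : E → ℝ} (hφ : ContDiff ℝ 1 φ)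
    (hg : ContDiff ℝ 1 g) (hgs : HasCompactSupport g) (w : E) :
    ∫ v, φ v * fderiv ℝ g v w ∂μ = -∫ v, fderiv ℝ φ v w * g v ∂μ := by
  have hφ' : Continuous fun v ↦ fderiv ℝ φ v w :=
    (hφ.continuous_fderiv one_ne_zero).clm_apply continuous_const
  have hg' : Continuous fun v ↦ fderiv ℝ g v w :=
    (hg.continuous_fderiv one_ne_zero).clm_apply continuous_const
  refine integral_mul_fderiv_eq_neg_fderiv_mul_of_integrable ?_ ?_ ?_
    (fun x _ ↦ hφ.differentiable one_ne_zero x) (fun x _ ↦ hg.differentiable one_ne_zero x)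
  · exact (hφ'.mul hg.continuous).integrable_of_hasCompactSupport hgs.mul_left
  · exact (hφ.continuous.mul hg').integrable_of_hasCompactSupport (hgs.fderiv_apply ℝ w).mul_left
  · exact (hφ.continuous.mul hg.continuous).integrable_of_hasCompactSupport hgs.mul_left

theorem integral_mul_divergence {φ : E → ℝ} {F : E → E} (hφ : ContDiff ℝ 1 φ)
    (hF : ContDiff ℝ 1 F) (hFs : HasCompactSupport F) :
    ∫ v, φ v * divergence F v ∂μ = -∫ v, fderiv ℝ φ v (F v) ∂μ := by
  let b := stdOrthonormalBasis ℝ E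
  have hFi (i) : ContDiff ℝ 1 fun w ↦ ⟪b i, F w⟫ := contDiff_const.inner ℝ hF
  have hFis (i) : HasCompactSupport fun w ↦ ⟪b i, F w⟫ :=
    hFs.comp_left (g := fun x ↦ ⟪b i, x⟫) (inner_zero_right _)
  have hsum (v) : fderiv ℝ φ v (F v) = ∑ i, fderiv ℝ φ v (b i) * ⟪b i, F v⟫ := by
    conv_lhs => rw [← b.sum_repr' (F v)]
    simp [mul_comm]
  calc ∫ v, φ v * divergence F v ∂μ
      = ∫ v, ∑ i, φ v * fderiv ℝ (fun w ↦ ⟪b i, F w⟫) v (b i) ∂μ := by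
        simp_rw [divergence_eq_sum_fderiv_inner b (hF.differentiable one_ne_zero _), Finset.mul_sum]
    _ = ∑ i, ∫ v, φ v * fderiv ℝ (fun w ↦ ⟪b i, F w⟫) v (b i) ∂μ := by
        refine integral_finsetSum _ fun i _ ↦ ?_
        exact (hφ.continuous.mul (((hFi i).continuous_fderiv one_ne_zero).clm_apply
          continuous_const)).integrable_of_hasCompactSupport ((hFis i).fderiv_apply ℝ _).mul_left
    _ = ∑ i, -∫ v, fderiv ℝ φ v (b i) * ⟪b i, F v⟫ ∂μ := by
        simp_rw [integral_mul_fderiv_eq_neg_of_hasCompactSupport hφ (hFi _) (hFis _)]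
    _ = -∫ v, fderiv ℝ φ v (F v) ∂μ := by
        rw [Finset.sum_neg_distrib, ← integral_finsetSum]
        · simp_rw [hsum]
        · intro i _
          exact (((hφ.continuous_fderiv one_ne_zero).clm_apply continuous_const).mul
            (hFi i).continuous).integrable_of_hasCompactSupport (hFis i).mul_left

theorem integral_divergence_smul_self {F : E → E} (hF : ContDiff ℝ 1 F)
    (hFs : HasCompactSupport F) : ∫ v, divergence F v • v ∂μ = -∫ v, F v ∂μ := by
  refine ext_inner_left ℝ fun e ↦ ?_
  have hint : Integrable (fun v ↦ divergence F v • v) μ :=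
    ((continuous_divergence hF).smul continuous_id).integrable_of_hasCompactSupport
      hFs.divergence.smul_right
  rw [← integral_inner hint, inner_neg_right,
    ← integral_inner (hF.continuous.integrable_of_hasCompactSupport hFs)]
  have h := integral_mul_divergence (μ := μ) (innerSL ℝ e).contDiff hF hFs
  simp only [ContinuousLinearMap.fderiv, innerSL_apply_apply] at h
  simpa only [real_inner_smul_right, mul_comm] using h

theorem integral_norm_sq_mul_divergence {F : E → E} (hF : ContDiff ℝ 1 F)
    (hFs : HasCompactSupport F) :
    ∫ v, ‖v‖ ^ 2 * divergence F v ∂μ = -(2 * ∫ v, ⟪v, F v⟫ ∂μ) := by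
  rw [integral_mul_divergence (contDiff_norm_sq ℝ) hF hFs, ← integral_const_mul]
  simp only [fderiv_norm_sq_apply, smul_apply, innerSL_apply_apply, nsmul_eq_mul,
    Nat.cast_ofNat]

end Divergence

section Penalization

variable {E : Type*} [NormedAddCommGroup E] [InnerProductSpace ℝ E]

lemma ContDiff.gradient [CompleteSpace E] {f : E → ℝ} {n : WithTop ℕ∞}
    (hf : ContDiff ℝ (n + 1) f) : ContDiff ℝ n (gradient f) :=
  (InnerProductSpace.toDual ℝ E).symm.contDiff.comp (hf.fderiv_right le_rfl)

/-- With `ρ = f`, `G = ∇f`, `c = λ_β⁻¹`, `u = u_β` this is the flux whose divergence is `L_β f`. -/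
noncomputable def penalizationFlux (β ρ : E → ℝ) (G : E → E) (c : ℝ) (u v : E) : E :=
  β v • (G v + c • (ρ v • (v - u)))

variable {β ρ : E → ℝ} {G : E → E} {c : ℝ} {u : E}

lemma ContDiff.penalizationFlux {n : WithTop ℕ∞} (hβ : ContDiff ℝ n β) (hρ : ContDiff ℝ n ρ)
    (hG : ContDiff ℝ n G) : ContDiff ℝ n (penalizationFlux β ρ G c u) :=
  hβ.smul (hG.add (contDiff_const.smul (hρ.smul (contDiff_id.sub contDiff_const))))

lemma HasCompactSupport.penalizationFlux (hβs : HasCompactSupport β) :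
    HasCompactSupport (penalizationFlux β ρ G c u) :=
  hβs.smul_right

variable [CompleteSpace E] [MeasurableSpace E] [OpensMeasurableSpace E] {μ : Measure E}
  [IsFiniteMeasureOnCompacts μ]

lemma integral_penalizationFlux (hβ : Continuous β) (hβs : HasCompactSupport β)
    (hρ : Continuous ρ) (hG : Continuous G) :
    ∫ v, penalizationFlux β ρ G c u v ∂μ =
      ∫ v, β v • G v ∂μ + c • (∫ v, (β v * ρ v) • v ∂μ - (∫ v, β v * ρ v ∂μ) • u) := by
  have hβG : Integrable (fun v ↦ β v • G v) μ :=
    (hβ.smul hG).integrable_of_hasCompactSupport hβs.smul_right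
  have hβρv : Integrable (fun v ↦ (β v * ρ v) • v) μ :=
    ((hβ.mul hρ).smul continuous_id).integrable_of_hasCompactSupport hβs.mul_right.smul_right
  have hβρ : Integrable (fun v ↦ β v * ρ v) μ :=
    (hβ.mul hρ).integrable_of_hasCompactSupport hβs.mul_right
  calc ∫ v, penalizationFlux β ρ G c u v ∂μ
      = ∫ v, β v • G v + c • ((β v * ρ v) • v - (β v * ρ v) • u) ∂μ := by
        congr 1 with v
        simp only [penalizationFlux]
        module
    _ = _ := by
        have hrest : Integrable (fun v ↦ c • ((β v * ρ v) • v - (β v * ρ v) • u)) μ :=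
          (hβρv.sub (hβρ.smul_const u)).smul c
        rw [integral_add hβG hrest, integral_smul,
          integral_sub hβρv (hβρ.smul_const u), integral_smul_const]

lemma integral_inner_penalizationFlux (hβ : Continuous β) (hβs : HasCompactSupport β)
    (hρ : Continuous ρ) (hG : Continuous G) :
    ∫ v, ⟪v, penalizationFlux β ρ G c u v⟫ ∂μ =
      ∫ v, β v * ⟪v, G v⟫ ∂μ +
        c * (∫ v, ‖v‖ ^ 2 * (β v * ρ v) ∂μ - ⟪u, ∫ v, (β v * ρ v) • v ∂μ⟫) := by
  have hβG : Integrable (fun v ↦ β v * ⟪v, G v⟫) μ :=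
    (hβ.mul (continuous_id.inner hG)).integrable_of_hasCompactSupport hβs.mul_right
  have hβρv : Integrable (fun v ↦ (β v * ρ v) • v) μ :=
    ((hβ.mul hρ).smul continuous_id).integrable_of_hasCompactSupport hβs.mul_right.smul_right
  have hβρv2 : Integrable (fun v ↦ ‖v‖ ^ 2 * (β v * ρ v)) μ :=
    ((continuous_norm.pow 2).mul (hβ.mul hρ)).integrable_of_hasCompactSupport
      hβs.mul_right.mul_left
  calc ∫ v, ⟪v, penalizationFlux β ρ G c u v⟫ ∂μ
      = ∫ v, β v * ⟪v, G v⟫ + c * (‖v‖ ^ 2 * (β v * ρ v) - ⟪u, (β v * ρ v) • v⟫) ∂μ := by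
        congr 1 with v
        simp only [penalizationFlux, inner_smul_right, inner_add_right, inner_sub_right,
          real_inner_self_eq_norm_sq, real_inner_comm v u]
        ring
    _ = _ := by
        have hinner : Integrable (fun v ↦ ⟪u, (β v * ρ v) • v⟫) μ := hβρv.const_inner u
        have hrest : Integrable (fun v ↦ c * (‖v‖ ^ 2 * (β v * ρ v) - ⟪u, (β v * ρ v) • v⟫)) μ :=
          (hβρv2.sub hinner).const_mul c
        rw [integral_add hβG hrest, integral_const_mul, integral_sub hβρv2 hinner,
          integral_inner hβρv]

end Penalization

section ConservativeChoice

variable {E : Type*} [NormedAddCommGroup E] [InnerProductSpace ℝ E]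

lemma sub_smul_eq_of_drift {n l : ℝ} {p A u : E} (hn0 : n ≠ 0)
    (hu : u = (1 / n) • (p - l • A)) : p - n • u = l • A := by
  rw [hu, smul_smul, mul_one_div_cancel hn0, one_smul, sub_sub_cancel]

lemma sub_inner_eq_of_drift {n l En B : ℝ} {p A u : E} (hn0 : n ≠ 0)
    (hden : n * B - ⟪A, p⟫ ≠ 0) (hl : l = (n * En - ‖p‖ ^ 2) / (n * B - ⟪A, p⟫))
    (hu : u = (1 / n) • (p - l • A)) : En - ⟪u, p⟫ = l * B := by
  rw [hu, real_inner_smul_left, inner_sub_left, real_inner_smul_left,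
    real_inner_self_eq_norm_sq, hl]
  field_simp
  ring

end ConservativeChoice

theorem stmt16_general (d : ℕ)
    (f : SchwartzMap (EuclideanSpace ℝ (Fin d)) ℝ)
    (β : EuclideanSpace ℝ (Fin d) → ℝ)
    (hβ : ContDiff ℝ 1 β) (hβs : HasCompactSupport β)
    (nβ Eβ Bβ : ℝ) (Aβ pβ : EuclideanSpace ℝ (Fin d))
    (hn : nβ = ∫ v, β v * f v)
    (hp : pβ = ∫ v, (β v * f v) • v)
    (hE : Eβ = ∫ v, ‖v‖ ^ 2 * (β v * f v))
    (hA : Aβ = -∫ v, β v • gradient (⇑f) v)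
    (hB : Bβ = -∫ v, β v * ⟪v, gradient (⇑f) v⟫)
    (hn0 : nβ ≠ 0) (hden : nβ * Bβ - ⟪Aβ, pβ⟫ ≠ 0)
    (lβ : ℝ) (hl : lβ = (nβ * Eβ - ‖pβ‖ ^ 2) / (nβ * Bβ - ⟪Aβ, pβ⟫))
    (hl0 : lβ ≠ 0)
    (uβ : EuclideanSpace ℝ (Fin d)) (hu : uβ = (1 / nβ) • (pβ - lβ • Aβ))
    (F : EuclideanSpace ℝ (Fin d) → EuclideanSpace ℝ (Fin d))
    (hF : ∀ v, F v = β v • (gradient (⇑f) v + lβ⁻¹ • (f v • (v - uβ))))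
    (L : EuclideanSpace ℝ (Fin d) → ℝ)
    (hL : ∀ v, L v = LinearMap.trace ℝ (EuclideanSpace ℝ (Fin d))
      (fderiv ℝ F v).toLinearMap) :
    (∫ v, L v • v) = 0 ∧ (∫ v, ‖v‖ ^ 2 * L v) = 0 := by
  have hFdef : F = penalizationFlux β f (gradient f) lβ⁻¹ uβ := funext hF
  have hLdef : L = divergence F := funext hL
  have hG : ContDiff ℝ 1 (gradient f) := ContDiff.gradient (f.smooth 2)
  have hFc : ContDiff ℝ 1 F := hFdef ▸ hβ.penalizationFlux (f.smooth 1) hG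
  have hFs : HasCompactSupport F := hFdef ▸ hβs.penalizationFlux
  have hmomentum : ∫ v, F v = 0 := by
    rw [hFdef, integral_penalizationFlux hβ.continuous hβs f.continuous hG.continuous, ← hn, ← hp,
      sub_smul_eq_of_drift hn0 hu, smul_smul, inv_mul_cancel₀ hl0, one_smul, hA,
      add_neg_cancel]
  have henergy : ∫ v, ⟪v, F v⟫ = 0 := by
    rw [hFdef, integral_inner_penalizationFlux hβ.continuous hβs f.continuous hG.continuous, ← hE,
      ← hp, sub_inner_eq_of_drift hn0 hden hl hu, inv_mul_cancel_left₀ hl0, hB,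
      add_neg_cancel]
  rw [hLdef, integral_divergence_smul_self hFc hFs, hmomentum,
    integral_norm_sq_mul_divergence hFc hFs, henergy]
  simp

/-- Momentum and energy conservation of the conservative penalization operator
L_β(f) = div(β(v)[∇f + ((v − u_β)/λ_β)f]) with the conservative choice of
(λ_β, u_β): its first and second velocity moments vanish. -/
theorem stmt16 (d : ℕ) (hd : 1 ≤ d)
    (f : SchwartzMap (EuclideanSpace ℝ (Fin d)) ℝ)
    (β : EuclideanSpace ℝ (Fin d) → ℝ)
    (hβ : ContDiff ℝ 1 β) (hβs : HasCompactSupport β)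
    (nβ Eβ Bβ : ℝ) (Aβ pβ : EuclideanSpace ℝ (Fin d))
    (hn : nβ = ∫ v, β v * f v)
    (hp : pβ = ∫ v, (β v * f v) • v)
    (hE : Eβ = ∫ v, ‖v‖ ^ 2 * (β v * f v))
    (hA : Aβ = -∫ v, β v • gradient (⇑f) v)
    (hB : Bβ = -∫ v, β v * ⟪v, gradient (⇑f) v⟫)
    (hn0 : nβ ≠ 0) (hden : nβ * Bβ - ⟪Aβ, pβ⟫ ≠ 0)
    (lβ : ℝ) (hl : lβ = (nβ * Eβ - ‖pβ‖ ^ 2) / (nβ * Bβ - ⟪Aβ, pβ⟫))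
    (hl0 : lβ ≠ 0)
    (uβ : EuclideanSpace ℝ (Fin d)) (hu : uβ = (1 / nβ) • (pβ - lβ • Aβ))
    (F : EuclideanSpace ℝ (Fin d) → EuclideanSpace ℝ (Fin d))
    (hF : ∀ v, F v = β v • (gradient (⇑f) v + lβ⁻¹ • (f v • (v - uβ))))
    (L : EuclideanSpace ℝ (Fin d) → ℝ)
    (hL : ∀ v, L v = LinearMap.trace ℝ (EuclideanSpace ℝ (Fin d))
      (fderiv ℝ F v).toLinearMap) :
    (∫ v, L v • v) = 0 ∧ (∫ v, ‖v‖ ^ 2 * L v) = 0 :=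
  stmt16_general d f β hβ hβs nβ Eβ Bβ Aβ pβ hn hp hE hA hB hn0 hden lβ hl hl0 uβ hu F hF L hL
end
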